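/- Let H : [0,∞)×ℝ^N×ℝ^N → ℝ be measurable in t, continuous in x and convex in p, and suppose |H(t,x,p)−H(t,y,p)| ≤ k(t)(1+|p|)|x−y| for all t ∈ [0,∞) and x,y,p ∈ ℝ^N, where k : [0,∞) → [0,∞). Set F(t,x) := dom H*(t,x,·) and E(t,x) := epi H*(t,x,·). Then for all t ∈ [0,∞) and x,y ∈ ℝ^N: dl_H(F(t,x),F(t,y)) ≤ k(t)|x−y| and dl_H(E(t,x),E(t,y)) ≤ 2k(t)|x−y|, where dl_H denotes the extended Hausdorff distance. -/

import Mathlib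

open MeasureTheory Set Filter Topology

noncomputable section

namespace HJB

/-- `ℝ^n`. -/
abbrev Euc (n : ℕ) : Type := EuclideanSpace ℝ (Fin n)

/-! ### Legendre–Fenchel conjugate (in the last variable) -/

/-- The Legendre–Fenchel conjugate of a real-valued function on `ℝ^N`,
with values in `ℝ ∪ {±∞}` (it is never `⊥`). -/
def conj {N : ℕ} (h : Euc N → ℝ) (v : Euc N) : EReal :=
  ⨆ p : Euc N, (((inner ℝ v p : ℝ) - h p : ℝ) : EReal)

/-- The effective domain of the conjugate. -/
def domConj {N : ℕ} (h : Euc N → ℝ) : Set (Euc N) := {v | conj h v ≠ ⊤}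

/-- The epigraph of the conjugate. -/
def epiConj {N : ℕ} (h : Euc N → ℝ) : Set (Euc N × ℝ) :=
  {q | conj h q.1 ≤ (q.2 : EReal)}

/-- The graph of the conjugate. -/
def gphConj {N : ℕ} (h : Euc N → ℝ) : Set (Euc N × ℝ) :=
  {q | conj h q.1 = (q.2 : EReal)}

/-- `H*(t,x,v)`, the conjugate of a Hamiltonian in the last variable. -/
def Hstar {N : ℕ} (H : ℝ → Euc N → Euc N → ℝ) (t : ℝ) (x v : Euc N) : EReal :=
  conj (H t x) v

/-! ### Integrability classes -/

/-- `φ ∈ L¹([0,∞);ℝ)`. -/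
def MemL1 (φ : ℝ → ℝ) : Prop := IntegrableOn φ (Ici 0)

/-- `c ∈ L¹_loc([0,∞);[0,∞))`. -/
def MemL1loc (c : ℝ → ℝ) : Prop :=
  (∀ t, 0 ≤ c t) ∧ ∀ b : ℝ, IntegrableOn c (Icc 0 b)

/-- The class `𝓛_loc` : nonnegative, locally integrable on `[0,∞)`, with uniformly
small integrals over short subintervals. -/
def MemLloc (k : ℝ → ℝ) : Prop :=
  MemL1loc k ∧ ∀ ε > (0:ℝ), ∃ σ > (0:ℝ), ∀ a b : ℝ, 0 ≤ a → a ≤ b → b - a ≤ σ →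
    (∫ τ in a..b, k τ) ≤ ε

/-! ### Cones -/

/-- The Bouligand tangent cone `T_A(x) = {ζ : liminf_{τ→0+} dist(x+τζ,A)/τ = 0}`. -/
def tangentConeB {F : Type*} [NormedAddCommGroup F] [NormedSpace ℝ F]
    (A : Set F) (x : F) : Set F :=
  {ζ | ∀ ε > (0:ℝ), ∀ δ > (0:ℝ), ∃ τ : ℝ, 0 < τ ∧ τ < δ ∧
    Metric.infDist (x + τ • ζ) A ≤ ε * τ}

/-- The regular normal cone (polar of the tangent cone). -/
def regNormal {N : ℕ} (A : Set (Euc N)) (x : Euc N) : Set (Euc N) :=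
  {ξ | ∀ ζ ∈ tangentConeB A x, (inner ℝ ζ ξ : ℝ) ≤ 0}

/-- The limiting normal cone. -/
def limNormal {N : ℕ} (A : Set (Euc N)) (x : Euc N) : Set (Euc N) :=
  {ξ | ∃ xs ξs : ℕ → Euc N, (∀ n, xs n ∈ A ∧ ξs n ∈ regNormal A (xs n)) ∧
    Tendsto xs atTop (nhds x) ∧ Tendsto ξs atTop (nhds ξ)}

/-- The set `N¹_{y,η}` of unit vectors in closed convex hulls of limiting normal
cones at boundary points near `y`. -/
def N1set {N : ℕ} (A : Set (Euc N)) (y : Euc N) (η : ℝ) : Set (Euc N) :=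
  {n | ‖n‖ = 1 ∧ ∃ x ∈ frontier A ∩ Metric.closedBall y η,
    n ∈ closure (convexHull ℝ (limNormal A x))}

/-- The outward pointing condition (OPC) for a set-valued velocity map `FF`. -/
def OPC {N : ℕ} (A : Set (Euc N)) (FF : ℝ → Euc N → Set (Euc N)) : Prop :=
  ∃ η > (0:ℝ), ∃ r > (0:ℝ), ∃ Mc : ℝ, 0 ≤ Mc ∧
    ∀ᵐ t ∂(volume.restrict (Ici (0:ℝ))), ∀ y : Euc N,
      (∃ z ∈ frontier A, dist y z ≤ η) →
      ∀ v ∈ FF t y, (∀ ε > (0:ℝ), ∃ n ∈ N1set A y η, (inner ℝ n v : ℝ) ≤ ε) →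
        ∃ w ∈ FF t y, dist w v ≤ Mc ∧
          ∀ n ∈ N1set A y η, r ≤ (inner ℝ n w : ℝ) ∧ r ≤ (inner ℝ n (w - v) : ℝ)

/-- `(OPC)_H` : the OPC condition for `dom H*`. -/
def OPCH {N : ℕ} (H : ℝ → Euc N → Euc N → ℝ) (A : Set (Euc N)) : Prop :=
  OPC A (fun t y => domConj (H t y))

/-! ### Conditions (h)'' and (h)''_H -/

/-- The image set `(f,l)(t,x,U(t))`. -/
def flimg {N M : ℕ} (U : ℝ → Set (Euc M)) (f : ℝ → Euc N → Euc M → Euc N)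
    (l : ℝ → Euc N → Euc M → ℝ) (t : ℝ) (x : Euc N) : Set (Euc N × ℝ) :=
  (fun u => (f t x u, l t x u)) '' U t

/-- Condition (h)'' for a control triple `(U,f,l)`, a constraint set `A`, and
data functions `φ ∈ L¹`, `c ∈ L¹_loc`, `k, q ∈ 𝓛_loc`. -/
def Hpp {N M : ℕ} (U : ℝ → Set (Euc M)) (f : ℝ → Euc N → Euc M → Euc N)
    (l : ℝ → Euc N → Euc M → ℝ) (A : Set (Euc N)) (φ c k q : ℝ → ℝ) : Prop :=
  (∀ O : Set (Euc M), IsOpen O → MeasurableSet {t : ℝ | (U t ∩ O).Nonempty}) ∧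
  (∀ t, (U t).Nonempty ∧ IsClosed (U t)) ∧
  -- (h1)
  (∀ x u, Measurable fun t => f t x u) ∧
  (∀ x u, Measurable fun t => l t x u) ∧
  (∀ t, Continuous fun q : Euc N × Euc M => f t q.1 q.2) ∧
  (∀ t, Continuous fun q : Euc N × Euc M => l t q.1 q.2) ∧
  MemL1 φ ∧ (∀ t, 0 ≤ t → ∀ x u, φ t ≤ l t x u) ∧
  -- (h2)
  MemL1loc c ∧
  (∀ t, 0 ≤ t → ∀ x, ∀ u ∈ U t, ‖f t x u‖ + |l t x u| ≤ c t * (1 + ‖x‖)) ∧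
  -- (h3)
  (∀ t, 0 ≤ t → ∀ x, IsClosed (flimg U f l t x) ∧
    Tendsto (fun y => EMetric.hausdorffEdist (flimg U f l t y) (flimg U f l t x))
      (nhds x) (nhds 0)) ∧
  -- (h4)
  (∀ t, 0 ≤ t → ∀ x, Convex ℝ {y : Euc N × ℝ |
    ∃ u ∈ U t, ∃ r : ℝ, 0 ≤ r ∧ y = (f t x u, l t x u + r)}) ∧
  -- (h5)
  MemLloc q ∧
  (∀ t, 0 ≤ t → ∀ x ∈ frontier A, ∀ u ∈ U t, ‖f t x u‖ + |l t x u| ≤ q t) ∧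
  -- (h6)
  MemLloc k ∧
  (∀ t, 0 ≤ t → ∀ x y, ∀ u ∈ U t,
    ‖f t x u - f t y u‖ + |l t x u - l t y u| ≤ k t * ‖x - y‖)

/-- Condition (h)''_H for a Hamiltonian `H`, a constraint set `A`, a function `λ`,
and data functions `φ ∈ L¹`, `c ∈ L¹_loc`, `k, q ∈ 𝓛_loc`. -/
def HppH {N : ℕ} (H : ℝ → Euc N → Euc N → ℝ) (A : Set (Euc N))
    (lam : ℝ → Euc N → ℝ) (φ c k q : ℝ → ℝ) : Prop :=
  -- (H1)
  (∀ x p, Measurable fun t => H t x p) ∧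
  (∀ t p, Continuous fun x => H t x p) ∧
  (∀ t x, ConvexOn ℝ univ (H t x)) ∧
  -- (H2)
  MemL1 φ ∧ (∀ t, 0 ≤ t → ∀ x, H t x 0 ≤ -φ t) ∧
  -- regularity of λ and of the data
  (∀ t x, 0 ≤ lam t x) ∧
  (∀ x, Measurable fun t => lam t x) ∧
  (∀ t, Continuous fun x => lam t x) ∧
  MemL1loc c ∧ MemLloc k ∧ MemLloc q ∧
  -- (H3)
  (∀ t, 0 ≤ t → ∀ x, lam t x ≤ c t * (1 + ‖x‖)) ∧
  (∀ t, 0 ≤ t → ∀ x ∈ frontier A, lam t x ≤ q t) ∧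
  -- (H4)
  (∀ t, 0 ≤ t → ∀ x y, |lam t x - lam t y| ≤ k t * ‖x - y‖) ∧
  -- (H5)
  (∀ t, 0 ≤ t → ∀ x y p, |H t x p - H t y p| ≤ k t * (1 + ‖p‖) * ‖x - y‖) ∧
  -- (H6)
  (∀ t, 0 ≤ t → ∀ x p p', |H t x p - H t x p'| ≤ lam t x * ‖p - p'‖) ∧
  -- (H7)
  (∀ t, 0 ≤ t → ∀ x v, Hstar H t x v ≠ ⊤ → |(Hstar H t x v).toReal| ≤ lam t x)

/-! ### Trajectories and value functions -/

/-- `x` is locally absolutely continuous on `[t₀,∞)` with a.e. derivative `dx`. -/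
def IsTrajOn {N : ℕ} (x dx : ℝ → Euc N) (t₀ : ℝ) : Prop :=
  (∀ b : ℝ, IntegrableOn dx (Icc t₀ b)) ∧
  ∀ t, t₀ ≤ t → x t = x t₀ + ∫ s in t₀..t, dx s

/-- `S_H(t₀,x₀)` : admissible pairs (trajectory, a.e. derivative) for the
calculus-of-variations problem with constraint set `A`. -/
def SH {N : ℕ} (H : ℝ → Euc N → Euc N → ℝ) (A : Set (Euc N)) (t₀ : ℝ)
    (x₀ : Euc N) : Set ((ℝ → Euc N) × (ℝ → Euc N)) :=
  {p | IsTrajOn p.1 p.2 t₀ ∧ p.1 t₀ = x₀ ∧ (∀ t, t₀ ≤ t → p.1 t ∈ A) ∧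
    ∀ᵐ t ∂(volume.restrict (Ici t₀)), Hstar H t (p.1 t) (p.2 t) ≠ ⊤}

open Classical in
/-- The cost `∫_{t₀}^∞ H*(t,x(t),ẋ(t)) dt ∈ ℝ ∪ {+∞}` of a trajectory. -/
def trajCost {N : ℕ} (H : ℝ → Euc N → Euc N → ℝ) (t₀ : ℝ)
    (p : (ℝ → Euc N) × (ℝ → Euc N)) : EReal :=
  if (∀ᵐ t ∂(volume.restrict (Ici t₀)), Hstar H t (p.1 t) (p.2 t) ≠ ⊤) ∧
     IntegrableOn (fun t => (Hstar H t (p.1 t) (p.2 t)).toReal) (Ici t₀)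
  then (((∫ t in Ici t₀, (Hstar H t (p.1 t) (p.2 t)).toReal) : ℝ) : EReal)
  else ⊤

/-- The value function `V` of the calculus-of-variations problem. -/
def valueV {N : ℕ} (H : ℝ → Euc N → Euc N → ℝ) (A : Set (Euc N)) (t₀ : ℝ)
    (x₀ : Euc N) : EReal :=
  sInf (trajCost H t₀ '' SH H A t₀ x₀)

/-- `S_f(t₀,x₀)` : admissible trajectory-control pairs of the control system. -/
def Sf {N M : ℕ} (U : ℝ → Set (Euc M)) (f : ℝ → Euc N → Euc M → Euc N)
    (A : Set (Euc N)) (t₀ : ℝ) (x₀ : Euc N) :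
    Set ((ℝ → Euc N) × (ℝ → Euc M)) :=
  {p | Measurable p.2 ∧ (∀ᵐ t ∂(volume.restrict (Ici t₀)), p.2 t ∈ U t) ∧
    (∀ b : ℝ, IntegrableOn (fun s => f s (p.1 s) (p.2 s)) (Icc t₀ b)) ∧
    p.1 t₀ = x₀ ∧ (∀ t, t₀ ≤ t → p.1 t ∈ A) ∧
    ∀ t, t₀ ≤ t → p.1 t = x₀ + ∫ s in t₀..t, f s (p.1 s) (p.2 s)}

open Classical in
/-- The cost `∫_{t₀}^∞ l(t,x(t),u(t)) dt ∈ ℝ ∪ {+∞}` of a trajectory-control pair. -/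
def ctrlCost {N M : ℕ} (l : ℝ → Euc N → Euc M → ℝ) (t₀ : ℝ)
    (p : (ℝ → Euc N) × (ℝ → Euc M)) : EReal :=
  if IntegrableOn (fun t => l t (p.1 t) (p.2 t)) (Ici t₀)
  then (((∫ t in Ici t₀, l t (p.1 t) (p.2 t)) : ℝ) : EReal)
  else ⊤

/-- The value function `𝒱` of the optimal control problem. -/
def valueVc {N M : ℕ} (U : ℝ → Set (Euc M)) (f : ℝ → Euc N → Euc M → Euc N)
    (l : ℝ → Euc N → Euc M → ℝ) (A : Set (Euc N)) (t₀ : ℝ) (x₀ : Euc N) : EReal :=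
  sInf (ctrlCost l t₀ '' Sf U f A t₀ x₀)

/-! ### Conditions (B), (B)_H, (LB), (VIC) -/

/-- Condition `(B)_H`. -/
def CondBH {N : ℕ} (H : ℝ → Euc N → Euc N → ℝ) (A : Set (Euc N)) : Prop :=
  (∃ t₀ ≥ (0:ℝ), ∃ x₀ ∈ A, valueV H A t₀ x₀ ≠ ⊤) ∧
  ∃ T > (0:ℝ), ∃ ψ : ℝ → ℝ, (∀ t, 0 ≤ ψ t) ∧ IntegrableOn ψ (Ici T) ∧
    ∀ t₀, T ≤ t₀ → ∀ x₀ ∈ A, valueV H A t₀ x₀ ≠ ⊤ →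
      ∀ p ∈ SH H A t₀ x₀,
        ∀ᵐ t ∂(volume.restrict (Ici t₀)), |(Hstar H t (p.1 t) (p.2 t)).toReal| ≤ ψ t

/-- Condition `(B)`. -/
def CondB {N M : ℕ} (U : ℝ → Set (Euc M)) (f : ℝ → Euc N → Euc M → Euc N)
    (l : ℝ → Euc N → Euc M → ℝ) (A : Set (Euc N)) (T : ℝ) (ψ : ℝ → ℝ) : Prop :=
  (∃ t₀ ≥ (0:ℝ), ∃ x₀ ∈ A, valueVc U f l A t₀ x₀ ≠ ⊤) ∧
  0 < T ∧ (∀ t, 0 ≤ ψ t) ∧ IntegrableOn ψ (Ici T) ∧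
    ∀ t₀, T ≤ t₀ → ∀ x₀ ∈ A, valueVc U f l A t₀ x₀ ≠ ⊤ →
      ∀ p ∈ Sf U f A t₀ x₀,
        ∀ᵐ t ∂(volume.restrict (Ici t₀)), |l t (p.1 t) (p.2 t)| ≤ ψ t

/-- Condition (LB), with the family `ψ r` of integrable bounds. -/
def CondLB {N M : ℕ} (U : ℝ → Set (Euc M)) (f : ℝ → Euc N → Euc M → Euc N)
    (l : ℝ → Euc N → Euc M → ℝ) (A : Set (Euc N)) (ψ : ℝ → ℝ → ℝ) : Prop :=
  ∀ r, 0 < r → (∀ t, 0 ≤ ψ r t) ∧ IntegrableOn (ψ r) (Ici 0) ∧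
    ∀ t₀, 0 ≤ t₀ → ∀ x₀ ∈ A, ‖x₀‖ ≤ r → ∀ p ∈ Sf U f A t₀ x₀,
      ∀ᵐ t ∂(volume.restrict (Ici t₀)), |l t (p.1 t) (p.2 t)| ≤ ψ r t

/-- Condition `(VIC)_H`. -/
def VICH {N : ℕ} (H : ℝ → Euc N → Euc N → ℝ) (A : Set (Euc N)) : Prop :=
  ∃ C : Set ℝ, C ⊆ Ioi 0 ∧ volume (Ioi 0 \ C) = 0 ∧
    ∀ t ∈ C, ∀ x ∈ A,
      (∃ v, Hstar H t x v ≠ ⊤ ∧ v ∈ tangentConeB A x) ∧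
      ∀ v, Hstar H t x v ≠ ⊤ → -v ∈ tangentConeB A x

/-- Condition (VIC) for a dynamics `f` with controls `U`. -/
def VICf {N M : ℕ} (U : ℝ → Set (Euc M)) (f : ℝ → Euc N → Euc M → Euc N)
    (A : Set (Euc N)) : Prop :=
  ∃ C : Set ℝ, C ⊆ Ioi 0 ∧ volume (Ioi 0 \ C) = 0 ∧
    ∀ t ∈ C, ∀ x ∈ A,
      (∃ u ∈ U t, f t x u ∈ tangentConeB A x) ∧
      ∀ u ∈ U t, -(f t x u) ∈ tangentConeB A x

/-! ### Weak solutions -/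

/-- The time–state–value space `ℝ × ℝ^N × ℝ`. -/
abbrev TXR (N : ℕ) : Type := ℝ × Euc N × ℝ

/-- The natural pairing on `ℝ × ℝ^N × ℝ`. -/
def pairTX {N : ℕ} (p q : TXR N) : ℝ :=
  p.1 * q.1 + (inner ℝ p.2.1 q.2.1 : ℝ) + p.2.2 * q.2.2

/-- The regular normal cone in `ℝ × ℝ^N × ℝ` (polar of the tangent cone). -/
def regNormalTX {N : ℕ} (S : Set (TXR N)) (z : TXR N) : Set (TXR N) :=
  {ξ | ∀ ζ ∈ tangentConeB S z, pairTX ζ ξ ≤ 0}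

/-- The epigraph of an extended-real function of `(t,x)`. -/
def epiTX {N : ℕ} (W : ℝ → Euc N → EReal) : Set (TXR N) :=
  {z | W z.1 z.2.1 ≤ (z.2.2 : EReal)}

/-- The epigraph of `W(t,·)`. -/
def epiX {N : ℕ} (W : ℝ → Euc N → EReal) (t : ℝ) : Set (Euc N × ℝ) :=
  {q | W t q.1 ≤ (q.2 : EReal)}

/-- The Fréchet subdifferential of `W` at `(t,x)` (only meaningful when `W t x` is finite). -/
def frSubdiff {N : ℕ} (W : ℝ → Euc N → EReal) (t : ℝ) (x : Euc N) :
    Set (ℝ × Euc N) :=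
  {p | ∀ ε > (0:ℝ), ∃ δ > (0:ℝ), ∀ s : ℝ, ∀ y : Euc N,
    dist ((s, y) : ℝ × Euc N) (t, x) < δ →
    ((((W t x).toReal + p.1 * (s - t) + (inner ℝ p.2 (y - x) : ℝ)
      - ε * dist ((s, y) : ℝ × Euc N) (t, x)) : ℝ) : EReal) ≤ W s y}

/-- A lower semicontinuous `W : [0,∞) × A → ℝ ∪ {+∞}` is a weak solution of
`-W_t + H(t,x,-W_x) = 0` on `(0,∞) × A`. -/
def IsWeakSolution {N : ℕ} (H : ℝ → Euc N → Euc N → ℝ) (A : Set (Euc N))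
    (W : ℝ → Euc N → EReal) : Prop :=
  ∃ C : Set ℝ, C ⊆ Ioi 0 ∧ volume (Ioi 0 \ C) = 0 ∧
    (∀ t ∈ C, ∀ x ∈ frontier A, W t x ≠ ⊤ →
      (∀ p ∈ frSubdiff W t x, 0 ≤ -p.1 + H t x (-p.2)) ∧
      (∀ pt : ℝ, ∀ px : Euc N,
        ((pt, px, (0:ℝ)) : TXR N) ∈ regNormalTX (epiTX W) (t, x, (W t x).toReal) →
        ∀ ε > (0:ℝ), ∃ v : Euc N, Hstar H t x v ≠ ⊤ ∧ pt - ε ≤ (inner ℝ v (-px) : ℝ))) ∧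
    (∀ t ∈ C, ∀ x ∈ interior A, W t x ≠ ⊤ →
      (∀ p ∈ frSubdiff W t x, -p.1 + H t x (-p.2) = 0) ∧
      (∀ pt : ℝ, ∀ px : Euc N,
        ((pt, px, (0:ℝ)) : TXR N) ∈ regNormalTX (epiTX W) (t, x, (W t x).toReal) →
        IsLUB {r : ℝ | ∃ v : Euc N, Hstar H t x v ≠ ⊤ ∧ r = (inner ℝ v (-px) : ℝ)} pt))

/-- Local absolute continuity of a set-valued map `t ⇝ P(t)` with nonempty closed
values. -/
def LocAbsCont {F : Type*} [MetricSpace F] (P : ℝ → Set F) : Prop :=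
  (∀ t, 0 ≤ t → (P t).Nonempty ∧ IsClosed (P t)) ∧
  ∀ S T : ℝ, 0 ≤ S → S ≤ T → ∀ ε > (0:ℝ), ∀ K : Set F, IsCompact K →
    ∃ δ > (0:ℝ), ∀ m : ℕ, ∀ s t : ℕ → ℝ,
      (∀ i, i < m → S ≤ s i ∧ s i < t i ∧ t i ≤ T) →
      (∀ i, i + 1 < m → t i ≤ s (i + 1)) →
      (∑ i ∈ Finset.range m, (t i - s i)) < δ →
      ∃ e : ℕ → ℝ,
        (∀ i, i < m → 0 ≤ e i ∧
          (P (t i) ∩ K ⊆ {y | ∃ z ∈ P (s i), dist y z ≤ e i}) ∧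
          (P (s i) ∩ K ⊆ {y | ∃ z ∈ P (t i), dist y z ≤ e i})) ∧
        (∑ i ∈ Finset.range m, e i) < ε

/-! ### The class 𝓗 -/

/-- The rescaled Hamiltonian `IH(t,x,p) := θ(t)⁻¹ H(t,x,θ(t)p)`. -/
def IHam {N : ℕ} (H : ℝ → Euc N → Euc N → ℝ) (θ : ℝ → ℝ) :
    ℝ → Euc N → Euc N → ℝ :=
  fun t x p => (θ t)⁻¹ * H t x (θ t • p)

/-- The `L^∞([0,∞))` norm. -/
def supNormInfty (θ : ℝ → ℝ) : ℝ :=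
  (essSup (fun t => ENNReal.ofReal |θ t|) (volume.restrict (Ici (0:ℝ)))).toReal


/-- The class `𝓗(θ,λ,{ψ_r},φ,c,A)`. -/
def ClassH {N : ℕ} (H : ℝ → Euc N → Euc N → ℝ) (θ : ℝ → ℝ)
    (lam : ℝ → Euc N → ℝ) (ψ : ℝ → ℝ → ℝ) (φ c : ℝ → ℝ) (A : Set (Euc N)) : Prop :=
  (∀ t, 0 < θ t) ∧ Measurable θ ∧
  essSup (fun t => ENNReal.ofReal |θ t|) (volume.restrict (Ici (0:ℝ))) ≠ ⊤ ∧
  (∀ r, 0 < r → (∀ t, 0 ≤ ψ r t) ∧ IntegrableOn (ψ r) (Ici 0)) ∧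
  (∃ k q : ℝ → ℝ, HppH (IHam H θ) A lam φ c k q) ∧
  ∀ r, 0 < r → ∀ t₀, 0 ≤ t₀ → ∀ x₀ ∈ A, ‖x₀‖ ≤ r →
    ∀ p ∈ SH (IHam H θ) A t₀ x₀,
      ∀ᵐ t ∂(volume.restrict (Ici t₀)), θ t * lam t (p.1 t) ≤ ψ r t

end HJB

/-! A Lipschitz bound `|h₁ - h₂| ≤ ε (1 + ‖·‖)` moves every `v ∈ dom h₁*` by at most `ε`:
if `⟪v, ·⟫ - h₁ ≤ c`, then the concave function `⟪v, p⟫ - ε ‖p‖ - (c + ε)` lies below the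
convex `h₂`, so an affine function `⟪w, ·⟫ + β` fits in between. Then `⟪w, ·⟫ - h₂ ≤ c + ε`,
and `⟪v - w, ·⟫ ≤ ε ‖·‖ + const` forces `‖v - w‖ ≤ ε`. Applied to `(v, c) ∈ epi h₁*` this
gives `(w, c + ε) ∈ epi h₂*`, at max-distance `ε` from `(v, c)`. -/

section ConvexAnalysis

variable {E : Type*}

theorem ConvexOn.exists_affine_between [NormedAddCommGroup E] [NormedSpace ℝ E]
    [FiniteDimensional ℝ E] {f g : E → ℝ} (hf : ConvexOn ℝ univ f) (hg : ConcaveOn ℝ univ g)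
    (hgf : ∀ p, g p ≤ f p) :
    ∃ (φ : E →L[ℝ] ℝ) (β : ℝ), (∀ p, g p ≤ φ p + β) ∧ ∀ p, φ p + β ≤ f p := by
  have hopen : IsOpen {z : E × ℝ | z.1 ∈ univ ∧ f z.1 < z.2} := by
    simp only [mem_univ, true_and]
    exact isOpen_lt (hf.locallyLipschitz.continuous.comp continuous_fst) continuous_snd
  have hdisj : Disjoint {z : E × ℝ | z.1 ∈ univ ∧ f z.1 < z.2} {z | z.1 ∈ univ ∧ z.2 ≤ g z.1} :=
    disjoint_left.2 fun z hA hB => (hA.2.trans_le (hB.2.trans (hgf z.1))).false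
  -- The hyperplane separating the strict epigraph of `f` from the hypograph of `g` cannot be
  -- vertical (`a < 0` below), so it is the graph of an affine function.
  obtain ⟨L, u, hLA, hLB⟩ :=
    geometric_hahn_banach_open hf.convex_strict_epigraph hopen hg.convex_hypograph hdisj
  set ℓ := L.comp (ContinuousLinearMap.inl ℝ E ℝ)
  set a := L (0, 1)
  have hL : ∀ p r, L (p, r) = ℓ p + r * a := fun p r => by
    rw [show ((p, r) : E × ℝ) = (p, 0) + r • (0, 1) by simp, map_add, map_smul, smul_eq_mul]
    rfl
  have hA : ∀ p δ, 0 < δ → ℓ p + (f p + δ) * a < u := fun p δ hδ =>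
    hL p _ ▸ hLA (p, f p + δ) ⟨trivial, by simpa using hδ⟩
  have hB : ∀ p, u ≤ ℓ p + g p * a := fun p => hL p _ ▸ hLB (p, g p) ⟨trivial, le_rfl⟩
  have ha : a < 0 := by
    by_contra! ha
    nlinarith [hA 0 1 one_pos, hB 0, hgf 0]
  have hφ : ∀ p, (-a⁻¹ • ℓ) p + u / a = (u - ℓ p) / a := fun p => by
    change -a⁻¹ * ℓ p + u / a = _
    field_simp
    ring
  refine ⟨-a⁻¹ • ℓ, u / a, fun p => ?_, fun p => ?_⟩
  · rw [hφ, le_div_iff_of_neg ha]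
    linarith [hB p]
  · rw [hφ]
    refine le_of_forall_pos_lt_add fun δ hδ => (div_lt_iff_of_neg ha).2 ?_
    linarith [hA p δ hδ]

variable [NormedAddCommGroup E] [InnerProductSpace ℝ E]

theorem norm_le_of_forall_inner_le {u : E} {ε C : ℝ} (hε : 0 ≤ ε)
    (h : ∀ p, inner ℝ u p ≤ ε * ‖p‖ + C) : ‖u‖ ≤ ε := by
  have hscaled : ∀ s : ℝ, 0 < s → s * (‖u‖ * (‖u‖ - ε)) ≤ C := fun s hs => by
    have := h (s • u)
    rw [real_inner_smul_right, real_inner_self_eq_norm_sq, norm_smul, Real.norm_of_nonneg hs.le]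
      at this
    linarith
  have hprod : ‖u‖ * (‖u‖ - ε) ≤ 0 := by
    by_contra! hpos
    have := hscaled ((|C| + 1) / (‖u‖ * (‖u‖ - ε))) (by positivity)
    rw [div_mul_cancel₀ _ hpos.ne'] at this
    linarith [le_abs_self C]
  nlinarith [norm_nonneg u]

theorem exists_norm_sub_le_and_inner_sub_le_add [FiniteDimensional ℝ E] {h₁ h₂ : E → ℝ} {ε c : ℝ}
    (hε : 0 ≤ ε) (hh₂ : ConvexOn ℝ univ h₂) (hle : ∀ p, h₁ p ≤ h₂ p + ε * (1 + ‖p‖))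
    {v : E} (hv : ∀ p, inner ℝ v p - h₁ p ≤ c) :
    ∃ w : E, ‖v - w‖ ≤ ε ∧ ∀ p, inner ℝ w p - h₂ p ≤ c + ε := by
  set g : E → ℝ := fun p => inner ℝ v p - ε * ‖p‖ - (c + ε)
  have hg : ConcaveOn ℝ univ g :=
    (((innerₗ E v).concaveOn convex_univ).sub ((convexOn_norm convex_univ).smul hε)).sub
      (convexOn_const _ convex_univ)
  have hgh₂ : ∀ p, g p ≤ h₂ p := fun p => by
    simp only [g]
    linarith [hv p, hle p]
  obtain ⟨φ, β, hgφ, hφh₂⟩ := hh₂.exists_affine_between hg hgh₂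
  set w := (InnerProductSpace.toDual ℝ E).symm φ
  have hw : ∀ p, inner ℝ w p = φ p := fun p => InnerProductSpace.toDual_symm_apply
  have hβ : -(c + ε) ≤ β := by simpa [g] using hgφ 0
  refine ⟨w, norm_le_of_forall_inner_le (C := β + c + ε) hε fun p => ?_, fun p => ?_⟩
  · rw [inner_sub_left, hw]
    linarith [hgφ p]
  · linarith [hw p, hφh₂ p]

end ConvexAnalysis

namespace HJB

section Conjugate

variable {N : ℕ}

theorem conj_le_coe_iff (h : Euc N → ℝ) (v : Euc N) (r : ℝ) :
    conj h v ≤ (r : EReal) ↔ ∀ p, inner ℝ v p - h p ≤ r := by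
  simp only [conj, iSup_le_iff, EReal.coe_le_coe_iff]

theorem conj_ne_top_iff (h : Euc N → ℝ) (v : Euc N) :
    conj h v ≠ ⊤ ↔ ∃ c : ℝ, ∀ p, inner ℝ v p - h p ≤ c := by
  refine ⟨fun hne => ?_, fun ⟨c, hc⟩ => ((conj_le_coe_iff h v c).2 hc).trans_lt
    (EReal.coe_lt_top c) |>.ne⟩
  have hbot : conj h v ≠ ⊥ :=
    ((EReal.bot_lt_coe _).trans_le (le_iSup (fun p => ((inner ℝ v p - h p : ℝ) : EReal)) 0)).ne'
  exact ⟨(conj h v).toReal, (conj_le_coe_iff h v _).1 (EReal.coe_toReal hne hbot).ge⟩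

variable {h₁ h₂ : Euc N → ℝ} {ε : ℝ}

theorem exists_mem_domConj_edist_le (hε : 0 ≤ ε) (hh₂ : ConvexOn ℝ univ h₂)
    (hle : ∀ p, h₁ p ≤ h₂ p + ε * (1 + ‖p‖)) {v : Euc N} (hv : v ∈ domConj h₁) :
    ∃ w ∈ domConj h₂, edist v w ≤ ENNReal.ofReal ε := by
  obtain ⟨c, hc⟩ := (conj_ne_top_iff h₁ v).1 hv
  obtain ⟨w, hvw, hw⟩ := exists_norm_sub_le_and_inner_sub_le_add hε hh₂ hle hc
  exact ⟨w, (conj_ne_top_iff h₂ w).2 ⟨c + ε, hw⟩, (edist_le_ofReal hε).2 (by rwa [dist_eq_norm])⟩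

theorem exists_mem_epiConj_edist_le (hε : 0 ≤ ε) (hh₂ : ConvexOn ℝ univ h₂)
    (hle : ∀ p, h₁ p ≤ h₂ p + ε * (1 + ‖p‖)) {q : Euc N × ℝ} (hq : q ∈ epiConj h₁) :
    ∃ q' ∈ epiConj h₂, edist q q' ≤ ENNReal.ofReal ε := by
  obtain ⟨w, hvw, hw⟩ :=
    exists_norm_sub_le_and_inner_sub_le_add hε hh₂ hle ((conj_le_coe_iff h₁ q.1 q.2).1 hq)
  refine ⟨(w, q.2 + ε), (conj_le_coe_iff h₂ w _).2 hw, ?_⟩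
  rw [Prod.edist_eq, max_le_iff, edist_le_ofReal hε, edist_le_ofReal hε, dist_eq_norm,
    Real.dist_eq]
  exact ⟨hvw, by simp [abs_of_nonneg hε]⟩

variable (hh₁ : ConvexOn ℝ univ h₁) (hh₂ : ConvexOn ℝ univ h₂)
  (hclose : ∀ p, |h₁ p - h₂ p| ≤ ε * (1 + ‖p‖))
include hh₁ hh₂ hclose

theorem hausdorffEDist_domConj_le :
    Metric.hausdorffEDist (domConj h₁) (domConj h₂) ≤ ENNReal.ofReal ε := by
  have hε : 0 ≤ ε := by simpa using (abs_nonneg _).trans (hclose 0)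
  exact Metric.hausdorffEDist_le_of_mem_edist
    (fun v hv => exists_mem_domConj_edist_le hε hh₂
      (fun p => by linarith [(abs_sub_le_iff.1 (hclose p)).1]) hv)
    (fun v hv => exists_mem_domConj_edist_le hε hh₁
      (fun p => by linarith [(abs_sub_le_iff.1 (hclose p)).2]) hv)

theorem hausdorffEDist_epiConj_le :
    Metric.hausdorffEDist (epiConj h₁) (epiConj h₂) ≤ ENNReal.ofReal ε := by
  have hε : 0 ≤ ε := by simpa using (abs_nonneg _).trans (hclose 0)
  exact Metric.hausdorffEDist_le_of_mem_edist
    (fun q hq => exists_mem_epiConj_edist_le hε hh₂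
      (fun p => by linarith [(abs_sub_le_iff.1 (hclose p)).1]) hq)
    (fun q hq => exists_mem_epiConj_edist_le hε hh₁
      (fun p => by linarith [(abs_sub_le_iff.1 (hclose p)).2]) hq)

end Conjugate

theorem stmt_3_general {N : ℕ} (H : ℝ → Euc N → Euc N → ℝ) (k : ℝ → ℝ)
    (hconv : ∀ t x, ConvexOn ℝ univ (H t x))
    (hlip : ∀ t, 0 ≤ t → ∀ x y p : Euc N,
      |H t x p - H t y p| ≤ k t * (1 + ‖p‖) * ‖x - y‖) :
    ∀ t, 0 ≤ t → ∀ x y : Euc N,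
      EMetric.hausdorffEdist (domConj (H t x)) (domConj (H t y))
        ≤ ENNReal.ofReal (k t * ‖x - y‖) ∧
      EMetric.hausdorffEdist (epiConj (H t x)) (epiConj (H t y))
        ≤ ENNReal.ofReal (2 * k t * ‖x - y‖) := by
  intro t ht x y
  have hclose : ∀ p, |H t x p - H t y p| ≤ k t * ‖x - y‖ * (1 + ‖p‖) := fun p => by
    linarith [hlip t ht x y p]
  have hε : 0 ≤ k t * ‖x - y‖ := by simpa using (abs_nonneg _).trans (hclose 0)
  exact ⟨hausdorffEDist_domConj_le (hconv t x) (hconv t y) hclose,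
    (hausdorffEDist_epiConj_le (hconv t x) (hconv t y) hclose).trans
      (ENNReal.ofReal_le_ofReal (by linarith))⟩

/-- Corollary `wrow-wm`, (M6)–(M7). If `H` is measurable in `t`,
continuous in `x`, convex in `p` and `k(t)(1+|p|)`-Lipschitz in `x`, then
`dl_H(F(t,x),F(t,y)) ≤ k(t)|x-y|` and `dl_H(E(t,x),E(t,y)) ≤ 2k(t)|x-y|`. -/
theorem stmt_3 {N : ℕ} (H : ℝ → Euc N → Euc N → ℝ) (k : ℝ → ℝ)
    (hk : ∀ t, 0 ≤ k t)
    (hmeas : ∀ x p, Measurable fun t => H t x p)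
    (hcont : ∀ t p, Continuous fun x => H t x p)
    (hconv : ∀ t x, ConvexOn ℝ univ (H t x))
    (hlip : ∀ t, 0 ≤ t → ∀ x y p : Euc N,
      |H t x p - H t y p| ≤ k t * (1 + ‖p‖) * ‖x - y‖) :
    ∀ t, 0 ≤ t → ∀ x y : Euc N,
      EMetric.hausdorffEdist (domConj (H t x)) (domConj (H t y))
        ≤ ENNReal.ofReal (k t * ‖x - y‖) ∧
      EMetric.hausdorffEdist (epiConj (H t x)) (epiConj (H t y))
        ≤ ENNReal.ofReal (2 * k t * ‖x - y‖) :=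
  stmt_3_general H k hconv hlip

end HJB
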